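/- arXiv:1905.04667 — 5 statements merged into one kernel-verified Lean document; each statement's English description precedes it below -/
import Mathlib

section
/- Let (Ω, 𝒜, ℙ) be a probability space and let X, Y : Ω → ℝ be random variables. Then the supremum of Corr[g(X), h(Y)] over all admissible comonotone pairs (g, h) equals the supremum, over all Borel functions k : ℝ → ℝ and all nondecreasing functions h₁, h₂ : ℝ → ℝ such that the pair (h₁ ∘ k, h₂ ∘ k) is admissible, of Corr[h₁(k(X)), h₂(k(Y))]. -/
open MeasureTheory ProbabilityTheory

/-- The Pearson correlation coefficient of two real-valued random variables. -/
noncomputable def corr {Ω : Type*} [MeasurableSpace Ω] (P : Measure Ω) (U V : Ω → ℝ) : ℝ :=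
  (∫ ω, (U ω - ∫ ω', U ω' ∂P) * (V ω - ∫ ω', V ω' ∂P) ∂P) /
    (Real.sqrt (variance U P) * Real.sqrt (variance V P))

/-- A pair `(g, h)` of Borel functions is admissible for `(X, Y)` if `g ∘ X` and `h ∘ Y`
both have finite, strictly positive variance. -/
def Admissible {Ω : Type*} [MeasurableSpace Ω] (P : Measure Ω) (X Y : Ω → ℝ)
    (g h : ℝ → ℝ) : Prop :=
  Measurable g ∧ Measurable h ∧
    MemLp (fun ω => g (X ω)) 2 P ∧ MemLp (fun ω => h (Y ω)) 2 P ∧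
    0 < variance (fun ω => g (X ω)) P ∧ 0 < variance (fun ω => h (Y ω)) P

/-- Two functions are comonotone if increments always agree in sign. -/
def Comonotone {α : Type*} (g h : α → ℝ) : Prop :=
  ∀ x x', 0 ≤ (g x - g x') * (h x - h x')

/-! A comonotone pair `(g, h)` is a pair of nondecreasing functions of `k = g + h`, and two
nondecreasing functions of a common `k` are comonotone, so both suprema range over the same set of
correlations. -/

namespace Comonotone

variable {α : Type*} {g h : α → ℝ}

theorem symm (hc : Comonotone g h) : Comonotone h g :=
  fun x x' => mul_comm (g x - g x') (h x - h x') ▸ hc x x'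

theorem right_le_of_left_lt (hc : Comonotone g h) {x y : α} (hxy : g x < g y) : h x ≤ h y := by
  have := hc y x
  nlinarith

theorem bddAbove_range_min (hc : Comonotone g h) (t : ℝ) :
    BddAbove (Set.range fun y => min (g y) (t - h y)) := by
  rcases isEmpty_or_nonempty α with hα | ⟨⟨x⟩⟩
  · simp [Set.range_eq_empty]
  refine ⟨max (g x) (t - h x), ?_⟩
  rintro _ ⟨y, rfl⟩
  rcases le_or_gt (g y) (g x) with hle | hlt
  · exact (min_le_left _ _).trans (hle.trans (le_max_left _ _))
  · have := hc.right_le_of_left_lt hlt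
    exact (min_le_right _ _).trans ((sub_le_sub_left this t).trans (le_max_right _ _))

/-- The witness is `t ↦ ⨆ y, min (g y) (t - h y)`: at `t = g x + h x` every term is at most `g x`,
and the term `y = x` equals it. -/
theorem exists_monotone_comp_add (hc : Comonotone g h) :
    ∃ φ : ℝ → ℝ, Monotone φ ∧ φ ∘ (g + h) = g := by
  refine ⟨fun t => ⨆ y, min (g y) (t - h y), fun s t hst => ?_, funext fun x => ?_⟩
  · exact ciSup_mono (hc.bddAbove_range_min t) fun y => min_le_min_left _ (by linarith)
  · show ⨆ y, min (g y) (g x + h x - h y) = g x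
    have : Nonempty α := ⟨x⟩
    refine le_antisymm (ciSup_le fun y => ?_) ?_
    · rcases le_or_gt (g y) (g x) with hle | hlt
      · exact (min_le_left _ _).trans hle
      · have := hc.right_le_of_left_lt hlt
        exact (min_le_right _ _).trans (by linarith)
    · convert le_ciSup (hc.bddAbove_range_min (g x + h x)) x using 1
      simp

end Comonotone

theorem Monotone.comonotone_comp {α β : Type*} [LinearOrder β] {k : α → β} {φ ψ : β → ℝ}
    (hφ : Monotone φ) (hψ : Monotone ψ) : Comonotone (φ ∘ k) (ψ ∘ k) := by
  intro x x'
  rcases le_total (k x') (k x) with hle | hle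
  · exact mul_nonneg (sub_nonneg.2 (hφ hle)) (sub_nonneg.2 (hψ hle))
  · exact mul_nonneg_of_nonpos_of_nonpos (sub_nonpos.2 (hφ hle)) (sub_nonpos.2 (hψ hle))

theorem co_correlation_eq_sup_over_common_factor_general
    {Ω : Type*} [MeasurableSpace Ω] (P : Measure Ω)
    (X Y : Ω → ℝ) :
    sSup {r : ℝ | ∃ g h : ℝ → ℝ, Admissible P X Y g h ∧ Comonotone g h ∧
        r = corr P (fun ω => g (X ω)) (fun ω => h (Y ω))} =
      sSup {r : ℝ | ∃ k h₁ h₂ : ℝ → ℝ, Measurable k ∧ Monotone h₁ ∧ Monotone h₂ ∧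
        Admissible P X Y (h₁ ∘ k) (h₂ ∘ k) ∧
        r = corr P (fun ω => h₁ (k (X ω))) (fun ω => h₂ (k (Y ω)))} := by
  congr 1
  ext r
  constructor
  · rintro ⟨g, h, hadm, hc, rfl⟩
    obtain ⟨h₁, mono₁, hg⟩ := hc.exists_monotone_comp_add
    obtain ⟨h₂, mono₂, hh⟩ := hc.symm.exists_monotone_comp_add
    rw [add_comm] at hh
    refine ⟨g + h, h₁, h₂, hadm.1.add hadm.2.1, mono₁, mono₂, by rwa [hg, hh], ?_⟩
    exact congrArg₂ (corr P) (funext fun ω => (congrFun hg (X ω)).symm)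
      (funext fun ω => (congrFun hh (Y ω)).symm)
  · rintro ⟨k, h₁, h₂, -, mono₁, mono₂, hadm, rfl⟩
    exact ⟨h₁ ∘ k, h₂ ∘ k, hadm, mono₁.comonotone_comp mono₂, rfl⟩

theorem co_correlation_eq_sup_over_common_factor
    {Ω : Type*} [MeasurableSpace Ω] (P : Measure Ω) [IsProbabilityMeasure P]
    (X Y : Ω → ℝ) (hX : Measurable X) (hY : Measurable Y) :
    sSup {r : ℝ | ∃ g h : ℝ → ℝ, Admissible P X Y g h ∧ Comonotone g h ∧
        r = corr P (fun ω => g (X ω)) (fun ω => h (Y ω))} =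
      sSup {r : ℝ | ∃ k h₁ h₂ : ℝ → ℝ, Measurable k ∧ Monotone h₁ ∧ Monotone h₂ ∧
        Admissible P X Y (h₁ ∘ k) (h₂ ∘ k) ∧
        r = corr P (fun ω => h₁ (k (X ω))) (fun ω => h₂ (k (Y ω)))} :=
  co_correlation_eq_sup_over_common_factor_general P X Y
end

section
/- Let (Ω, 𝒜, ℙ) be a probability space and let X, Y : Ω → ℝ be random variables. Then the supremum of Corr[g(X), h(Y)] over all admissible antimonotone pairs (g, h) equals the supremum, over all Borel functions k : ℝ → ℝ, all nondecreasing h₁ : ℝ → ℝ and all nonincreasing h₂ : ℝ → ℝ such that the pair (h₁ ∘ k, h₂ ∘ k) is admissible, of Corr[h₁(k(X)), h₂(k(Y))]. -/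
/-!
Both sets of correlations coincide. A pair `(h₁ ∘ k, h₂ ∘ k)` with `h₁` nondecreasing and `h₂`
nonincreasing is clearly antimonotone. Conversely, if `(g, h)` is antimonotone, put `k = g - h`:
then `g` is a nondecreasing and 1-Lipschitz function of `k`, i.e. `g x' - g x ≤ max (k x' - k x) 0`.
Its McShane-type extension `h₁ t := ⨅ x, g x + max (t - k x) 0` to all of `ℝ` is nondecreasing,
`h₂ := h₁ - id` is nonincreasing, and `h₁ ∘ k = g`, `h₂ ∘ k = g - k = h`.
-/

open MeasureTheory ProbabilityTheory

/-- Two functions are antimonotone if increments always disagree in sign. -/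
def Antimonotone {α : Type*} (g h : α → ℝ) : Prop :=
  ∀ x x', (g x - g x') * (h x - h x') ≤ 0

theorem Monotone.antimonotone_comp {α β : Type*} [LinearOrder β] {h₁ h₂ : β → ℝ}
    (mono : Monotone h₁) (anti : Antitone h₂) (k : α → β) :
    Antimonotone (h₁ ∘ k) (h₂ ∘ k) := by
  intro x x'
  rcases le_total (k x) (k x') with hkx | hkx
  · exact mul_nonpos_of_nonpos_of_nonneg (sub_nonpos.2 (mono hkx)) (sub_nonneg.2 (anti hkx))
  · exact mul_nonpos_of_nonneg_of_nonpos (sub_nonneg.2 (mono hkx)) (sub_nonpos.2 (anti hkx))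

theorem Antimonotone.sub_le_max_sub {α : Type*} {g h : α → ℝ} (anti : Antimonotone g h)
    (x x' : α) : g x' - g x ≤ max ((g - h) x' - (g - h) x) 0 := by
  have := anti x x'
  simp only [Pi.sub_apply]
  rcases le_total ((g x' - h x') - (g x - h x)) 0 with hk | hk
  · rw [max_eq_right hk]; nlinarith
  · rw [max_eq_left hk]; nlinarith

noncomputable def mcshaneExtension {α : Type*} (f k : α → ℝ) (t : ℝ) : ℝ :=
  ⨅ x, f x + max (t - k x) 0

section mcshaneExtension

variable {α : Type*} {f k : α → ℝ}

theorem bddBelow_range_mcshaneExtension [Nonempty α]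
    (hf : ∀ x x', f x' - f x ≤ max (k x' - k x) 0) (t : ℝ) :
    BddBelow (Set.range fun x => f x + max (t - k x) 0) := by
  obtain ⟨x₀⟩ := ‹Nonempty α›
  refine ⟨f x₀ - max (k x₀ - t) 0, ?_⟩
  rintro _ ⟨x, rfl⟩
  have := max_add_add_le_max_add_max (a := t - k x) (b := k x₀ - t) (c := 0) (d := 0)
  simp only [sub_add_sub_cancel', add_zero] at this
  linarith [hf x x₀]

theorem mcshaneExtension_apply (hf : ∀ x x', f x' - f x ≤ max (k x' - k x) 0) (x : α) :
    mcshaneExtension f k (k x) = f x := by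
  have : Nonempty α := ⟨x⟩
  refine le_antisymm ?_ (le_ciInf fun x' => ?_)
  · simpa [mcshaneExtension] using ciInf_le (bddBelow_range_mcshaneExtension hf (k x)) x
  · linarith [hf x' x]

theorem monotone_mcshaneExtension [Nonempty α]
    (hf : ∀ x x', f x' - f x ≤ max (k x' - k x) 0) : Monotone (mcshaneExtension f k) :=
  fun _ _ htt' => ciInf_mono (bddBelow_range_mcshaneExtension hf _) fun _ => by gcongr

theorem antitone_mcshaneExtension_sub [Nonempty α]
    (hf : ∀ x x', f x' - f x ≤ max (k x' - k x) 0) :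
    Antitone fun t => mcshaneExtension f k t - t := by
  intro t t' htt'
  suffices mcshaneExtension f k t' - (t' - t) ≤ mcshaneExtension f k t by dsimp only; linarith
  refine le_ciInf fun x => ?_
  have := ciInf_le (bddBelow_range_mcshaneExtension hf t') x
  have : max (t' - k x) 0 ≤ max (t - k x) 0 + (t' - t) := by
    rw [← max_add_add_right, zero_add, sub_add_sub_cancel']
    exact max_le_max le_rfl (by linarith)
  simp only [mcshaneExtension] at *
  linarith

end mcshaneExtension

theorem Antimonotone.exists_comp_monotone_antitone {α : Type*} [MeasurableSpace α] [Nonempty α]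
    {g h : α → ℝ} (hg : Measurable g) (hh : Measurable h) (anti : Antimonotone g h) :
    ∃ (k : α → ℝ) (h₁ h₂ : ℝ → ℝ), Measurable k ∧ Monotone h₁ ∧ Antitone h₂ ∧
      g = h₁ ∘ k ∧ h = h₂ ∘ k := by
  have hk := anti.sub_le_max_sub
  refine ⟨g - h, mcshaneExtension g (g - h), fun t => mcshaneExtension g (g - h) t - t,
    hg.sub hh, monotone_mcshaneExtension hk, antitone_mcshaneExtension_sub hk, ?_, ?_⟩ <;>
      funext x <;> simp only [Function.comp_apply, mcshaneExtension_apply hk]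
  simp only [Pi.sub_apply, sub_sub_cancel]

theorem anti_correlation_eq_sup_over_common_factor_general
    {Ω : Type*} [MeasurableSpace Ω] (P : Measure Ω)
    (X Y : Ω → ℝ) :
    sSup {r : ℝ | ∃ g h : ℝ → ℝ, Admissible P X Y g h ∧ Antimonotone g h ∧
        r = corr P (fun ω => g (X ω)) (fun ω => h (Y ω))} =
      sSup {r : ℝ | ∃ k h₁ h₂ : ℝ → ℝ, Measurable k ∧ Monotone h₁ ∧ Antitone h₂ ∧
        Admissible P X Y (h₁ ∘ k) (h₂ ∘ k) ∧
        r = corr P (fun ω => h₁ (k (X ω))) (fun ω => h₂ (k (Y ω)))} := by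
  congr 1
  ext r
  constructor
  · rintro ⟨g, h, adm, hgh, rfl⟩
    obtain ⟨k, h₁, h₂, hk, mono, anti, rfl, rfl⟩ :=
      Antimonotone.exists_comp_monotone_antitone adm.1 adm.2.1 hgh
    exact ⟨k, h₁, h₂, hk, mono, anti, adm, rfl⟩
  · rintro ⟨k, h₁, h₂, -, mono, anti, adm, rfl⟩
    exact ⟨h₁ ∘ k, h₂ ∘ k, adm, mono.antimonotone_comp anti k, rfl⟩

theorem anti_correlation_eq_sup_over_common_factor
    {Ω : Type*} [MeasurableSpace Ω] (P : Measure Ω) [IsProbabilityMeasure P]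
    (X Y : Ω → ℝ) (hX : Measurable X) (hY : Measurable Y) :
    sSup {r : ℝ | ∃ g h : ℝ → ℝ, Admissible P X Y g h ∧ Antimonotone g h ∧
        r = corr P (fun ω => g (X ω)) (fun ω => h (Y ω))} =
      sSup {r : ℝ | ∃ k h₁ h₂ : ℝ → ℝ, Measurable k ∧ Monotone h₁ ∧ Antitone h₂ ∧
        Admissible P X Y (h₁ ∘ k) (h₂ ∘ k) ∧
        r = corr P (fun ω => h₁ (k (X ω))) (fun ω => h₂ (k (Y ω)))} :=
  anti_correlation_eq_sup_over_common_factor_general P X Y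
end

section
/- Let (Ω, 𝒜, ℙ) be a probability space and let X, Y : Ω → ℝ be random variables. Then the supremum of Corr[g(X), h(Y)] over all admissible pairs (g, h) that are comonotone or antimonotone equals the supremum, over all Borel functions k : ℝ → ℝ and all monotone functions h₁, h₂ : ℝ → ℝ (each either nondecreasing or nonincreasing) such that the pair (h₁ ∘ k, h₂ ∘ k) is admissible, of Corr[h₁(k(X)), h₂(k(Y))]. -/
open MeasureTheory ProbabilityTheory

/-
If `g` and `h` are comonotone, then along `k = g + h` both `g` and `h` are
nondecreasing (an increase of `k` cannot come with a decrease of either summand), so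
`g = h₁ ∘ k` and `h = h₂ ∘ k` with `h₁`, `h₂` monotone; the antimonotone case is the comonotone
one for `(g, -h)`, with `k = g - h`. Conversely monotone or antitone `h₁`, `h₂` make
`(h₁ ∘ k, h₂ ∘ k)` comonotone or antimonotone, so the two sets of correlations coincide.
-/

section Monovary

variable {ι : Type*} {f g : ι → ℝ}

theorem Monovary.le_of_add_le (hfg : Monovary f g) {i j : ι}
    (hij : f i + g i ≤ f j + g j) : f i ≤ f j := by
  by_contra! hlt
  linarith [hfg.symm hlt]

/-- The factor is `F t = ⨆ i, (f i - (f i + g i - t)⁺)`: every term is monotone in `t`, and at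
`t = f j + g j` the `j`-th term is `f j` and dominates the others. -/
theorem Monovary.exists_monotone_comp_add [Nonempty ι] (hfg : Monovary f g) :
    ∃ F : ℝ → ℝ, Monotone F ∧ F ∘ (f + g) = f := by
  have term_le : ∀ i j t, f i - max 0 (f i + g i - t) ≤ max (f j) (t - g j) := by
    intro i j t
    rcases le_total (f i + g i) (f j + g j) with hij | hji
    · linarith [hfg.le_of_add_le hij, le_max_left 0 (f i + g i - t), le_max_left (f j) (t - g j)]
    · have : g j ≤ g i := hfg.symm.le_of_add_le (by linarith)
      linarith [le_max_right 0 (f i + g i - t), le_max_right (f j) (t - g j)]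
  have bdd : ∀ t, BddAbove (Set.range fun i => f i - max 0 (f i + g i - t)) := fun t =>
    ⟨_, Set.forall_mem_range.2 fun i => term_le i (Classical.arbitrary ι) t⟩
  refine ⟨fun t => ⨆ i, (f i - max 0 (f i + g i - t)), fun t t' htt' => ?_, funext fun j => ?_⟩
  · exact ciSup_mono (bdd t') fun i => by gcongr
  · refine le_antisymm (ciSup_le fun i => (term_le i j _).trans ?_) (le_ciSup_of_le (bdd _) j ?_) <;> simp

theorem Monovary.exists_monotone_factor_add [Nonempty ι] (hfg : Monovary f g) :
    ∃ F G : ℝ → ℝ, Monotone F ∧ Monotone G ∧ f = F ∘ (f + g) ∧ g = G ∘ (f + g) := by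
  obtain ⟨F, hF, hFf⟩ := hfg.exists_monotone_comp_add
  obtain ⟨G, hG, hGg⟩ := hfg.symm.exists_monotone_comp_add
  exact ⟨F, G, hF, hG, hFf.symm, by rw [add_comm, hGg]⟩

theorem Antivary.exists_monotone_antitone_factor_sub [Nonempty ι] (hfg : Antivary f g) :
    ∃ F G : ℝ → ℝ, Monotone F ∧ Antitone G ∧ f = F ∘ (f - g) ∧ g = G ∘ (f - g) := by
  obtain ⟨F, G, hF, hG, hFf, hGg⟩ := hfg.neg_right.exists_monotone_factor_add
  refine ⟨F, -G, hF, hG.neg, by rwa [sub_eq_add_neg], ?_⟩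
  rw [sub_eq_add_neg, Pi.neg_comp, ← hGg, neg_neg]

end Monovary

theorem comonotone_iff_monovary {α : Type*} {g h : α → ℝ} : Comonotone g h ↔ Monovary g h := by
  rw [monovary_iff_forall_mul_nonneg]
  exact ⟨fun hgh x x' => hgh x' x, fun hgh x x' => hgh x' x⟩

theorem antimonotone_iff_antivary {α : Type*} {g h : α → ℝ} :
    Antimonotone g h ↔ Antivary g h := by
  rw [antivary_iff_forall_mul_nonpos]
  exact ⟨fun hgh x x' => hgh x' x, fun hgh x x' => hgh x' x⟩

theorem comonotone_or_antimonotone_comp {α β : Type*} [LinearOrder β] {h₁ h₂ : β → ℝ}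
    (hh₁ : Monotone h₁ ∨ Antitone h₁) (hh₂ : Monotone h₂ ∨ Antitone h₂) (k : α → β) :
    Comonotone (h₁ ∘ k) (h₂ ∘ k) ∨ Antimonotone (h₁ ∘ k) (h₂ ∘ k) := by
  simp only [comonotone_iff_monovary, antimonotone_iff_antivary]
  rcases hh₁ with hh₁ | hh₁ <;> rcases hh₂ with hh₂ | hh₂
  · exact .inl ((hh₁.monovary hh₂).comp_right k)
  · exact .inr ((hh₁.antivary hh₂).comp_right k)
  · exact .inr ((hh₁.antivary hh₂).comp_right k)
  · exact .inl ((hh₁.monovary hh₂).comp_right k)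

theorem exists_measurable_monotone_factor {g h : ℝ → ℝ} (hg : Measurable g)
    (hh : Measurable h) (hgh : Comonotone g h ∨ Antimonotone g h) :
    ∃ k : ℝ → ℝ, Measurable k ∧ ∃ h₁ h₂ : ℝ → ℝ, (Monotone h₁ ∨ Antitone h₁) ∧
      (Monotone h₂ ∨ Antitone h₂) ∧ g = h₁ ∘ k ∧ h = h₂ ∘ k := by
  rcases hgh with hgh | hgh
  · obtain ⟨h₁, h₂, hh₁, hh₂, hg_eq, hh_eq⟩ :=
      (comonotone_iff_monovary.1 hgh).exists_monotone_factor_add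
    exact ⟨g + h, hg.add hh, h₁, h₂, .inl hh₁, .inl hh₂, hg_eq, hh_eq⟩
  · obtain ⟨h₁, h₂, hh₁, hh₂, hg_eq, hh_eq⟩ :=
      (antimonotone_iff_antivary.1 hgh).exists_monotone_antitone_factor_sub
    exact ⟨g - h, hg.sub hh, h₁, h₂, .inl hh₁, .inr hh₂, hg_eq, hh_eq⟩

theorem coanti_correlation_eq_sup_over_common_factor_general
    {Ω : Type*} [MeasurableSpace Ω] (P : Measure Ω)
    (X Y : Ω → ℝ) :
    sSup {r : ℝ | ∃ g h : ℝ → ℝ, Admissible P X Y g h ∧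
        (Comonotone g h ∨ Antimonotone g h) ∧
        r = corr P (fun ω => g (X ω)) (fun ω => h (Y ω))} =
      sSup {r : ℝ | ∃ k h₁ h₂ : ℝ → ℝ, Measurable k ∧
        (Monotone h₁ ∨ Antitone h₁) ∧ (Monotone h₂ ∨ Antitone h₂) ∧
        Admissible P X Y (h₁ ∘ k) (h₂ ∘ k) ∧
        r = corr P (fun ω => h₁ (k (X ω))) (fun ω => h₂ (k (Y ω)))} := by
  congr 1
  ext r
  constructor
  · rintro ⟨g, h, hadm, hgh, rfl⟩
    obtain ⟨k, hk, h₁, h₂, hh₁, hh₂, rfl, rfl⟩ :=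
      exists_measurable_monotone_factor hadm.1 hadm.2.1 hgh
    exact ⟨k, h₁, h₂, hk, hh₁, hh₂, hadm, rfl⟩
  · rintro ⟨k, h₁, h₂, -, hh₁, hh₂, hadm, rfl⟩
    exact ⟨h₁ ∘ k, h₂ ∘ k, hadm, comonotone_or_antimonotone_comp hh₁ hh₂ k, rfl⟩

theorem coanti_correlation_eq_sup_over_common_factor
    {Ω : Type*} [MeasurableSpace Ω] (P : Measure Ω) [IsProbabilityMeasure P]
    (X Y : Ω → ℝ) (hX : Measurable X) (hY : Measurable Y) :
    sSup {r : ℝ | ∃ g h : ℝ → ℝ, Admissible P X Y g h ∧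
        (Comonotone g h ∨ Antimonotone g h) ∧
        r = corr P (fun ω => g (X ω)) (fun ω => h (Y ω))} =
      sSup {r : ℝ | ∃ k h₁ h₂ : ℝ → ℝ, Measurable k ∧
        (Monotone h₁ ∨ Antitone h₁) ∧ (Monotone h₂ ∨ Antitone h₂) ∧
        Admissible P X Y (h₁ ∘ k) (h₂ ∘ k) ∧
        r = corr P (fun ω => h₁ (k (X ω))) (fun ω => h₂ (k (Y ω)))} :=
  coanti_correlation_eq_sup_over_common_factor_general P X Y
end

section
/- Let p be a d × d confusion matrix whose marginals pX and pY are both nondegenerate. Then ρ_MON(p) = 0 if and only if p i j = pX i · pY j for all i, j. -/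
open Finset

variable {d : ℕ}

/-- Row marginal of a confusion matrix. -/
def pX (p : Fin d → Fin d → ℝ) (i : Fin d) : ℝ := ∑ j, p i j

/-- Column marginal of a confusion matrix. -/
def pY (p : Fin d → Fin d → ℝ) (j : Fin d) : ℝ := ∑ i, p i j

/-- Mean of the scores `f` under the row marginal. -/
def muX (p : Fin d → Fin d → ℝ) (f : Fin d → ℝ) : ℝ := ∑ i, f i * pX p i

/-- Mean of the scores `g` under the column marginal. -/
def muY (p : Fin d → Fin d → ℝ) (g : Fin d → ℝ) : ℝ := ∑ j, g j * pY p j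

/-- Variance of the scores `f` under the row marginal. -/
def VX (p : Fin d → Fin d → ℝ) (f : Fin d → ℝ) : ℝ :=
  (∑ i, (f i) ^ 2 * pX p i) - (muX p f) ^ 2

/-- Variance of the scores `g` under the column marginal. -/
def VY (p : Fin d → Fin d → ℝ) (g : Fin d → ℝ) : ℝ :=
  (∑ j, (g j) ^ 2 * pY p j) - (muY p g) ^ 2

/-- Correlation of the pair of score vectors `(f, g)` with respect to `p`. -/
noncomputable def C (p : Fin d → Fin d → ℝ) (f g : Fin d → ℝ) : ℝ :=
  ((∑ i, ∑ j, f i * p i j * g j) - muX p f * muY p g) /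
    (Real.sqrt (VX p f) * Real.sqrt (VY p g))

/-- `p` is a confusion matrix: nonnegative entries summing to one. -/
def IsConfusion (p : Fin d → Fin d → ℝ) : Prop :=
  (∀ i j, 0 ≤ p i j) ∧ (∑ i, ∑ j, p i j) = 1

/-- A pair of score vectors is nondegenerate if both variances are positive. -/
def Nondeg (p : Fin d → Fin d → ℝ) (f g : Fin d → ℝ) : Prop :=
  0 < VX p f ∧ 0 < VY p g

/-- The row marginal is nondegenerate: positive at two or more indices. -/
def NondegX (p : Fin d → Fin d → ℝ) : Prop :=
  ∃ i i' : Fin d, i ≠ i' ∧ 0 < pX p i ∧ 0 < pX p i'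

/-- The column marginal is nondegenerate: positive at two or more indices. -/
def NondegY (p : Fin d → Fin d → ℝ) : Prop :=
  ∃ j j' : Fin d, j ≠ j' ∧ 0 < pY p j ∧ 0 < pY p j'

/-- Two score vectors are comonotone if increments always agree in sign. -/
def Como (f g : Fin d → ℝ) : Prop := ∀ i j, 0 ≤ (f i - f j) * (g i - g j)

/-- Two score vectors are antimonotone if increments always disagree in sign. -/
def AntiCo (f g : Fin d → ℝ) : Prop := ∀ i j, (f i - f j) * (g i - g j) ≤ 0

/-- The II-correlation coefficient. -/
noncomputable def rhoII (p : Fin d → Fin d → ℝ) : ℝ :=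
  sSup {r : ℝ | ∃ f g : Fin d → ℝ, Nondeg p f g ∧ Monotone f ∧ Monotone g ∧ r = C p f g}

/-- The ID-correlation coefficient. -/
noncomputable def rhoID (p : Fin d → Fin d → ℝ) : ℝ :=
  sSup {r : ℝ | ∃ f g : Fin d → ℝ, Nondeg p f g ∧ Monotone f ∧ Antitone g ∧ r = C p f g}

/-- The MON-correlation coefficient. -/
noncomputable def rhoMON (p : Fin d → Fin d → ℝ) : ℝ :=
  sSup {r : ℝ | ∃ f g : Fin d → ℝ, Nondeg p f g ∧
    (Monotone f ∨ Antitone f) ∧ (Monotone g ∨ Antitone g) ∧ r = C p f g}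

/-- The CO-correlation coefficient. -/
noncomputable def rhoCO (p : Fin d → Fin d → ℝ) : ℝ :=
  sSup {r : ℝ | ∃ f g : Fin d → ℝ, Nondeg p f g ∧ Como f g ∧ r = C p f g}

/-- The ANTI-correlation coefficient. -/
noncomputable def rhoANTI (p : Fin d → Fin d → ℝ) : ℝ :=
  sSup {r : ℝ | ∃ f g : Fin d → ℝ, Nondeg p f g ∧ AntiCo f g ∧ r = C p f g}

/-- The COANTI-correlation coefficient. -/
noncomputable def rhoCOANTI (p : Fin d → Fin d → ℝ) : ℝ :=
  sSup {r : ℝ | ∃ f g : Fin d → ℝ, Nondeg p f g ∧ (Como f g ∨ AntiCo f g) ∧ r = C p f g}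

/-- The SUP-correlation coefficient. -/
noncomputable def rhoSUP (p : Fin d → Fin d → ℝ) : ℝ :=
  sSup {r : ℝ | ∃ f g : Fin d → ℝ, Nondeg p f g ∧ r = C p f g}

section Aux

variable {d : ℕ}

lemma pX_nonneg {p : Fin d → Fin d → ℝ} (hp : IsConfusion p) (i : Fin d) : 0 ≤ pX p i :=
  Finset.sum_nonneg fun j _ => hp.1 i j

lemma pY_nonneg {p : Fin d → Fin d → ℝ} (hp : IsConfusion p) (j : Fin d) : 0 ≤ pY p j :=
  Finset.sum_nonneg fun i _ => hp.1 i j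

lemma sum_pX_eq_one {p : Fin d → Fin d → ℝ} (hp : IsConfusion p) : ∑ i, pX p i = 1 := hp.2

lemma sum_pY_eq_one {p : Fin d → Fin d → ℝ} (hp : IsConfusion p) : ∑ j, pY p j = 1 := by
  unfold pY; rw [Finset.sum_comm]; exact hp.2

/-- covariance -/
def cov (p : Fin d → Fin d → ℝ) (f g : Fin d → ℝ) : ℝ :=
  (∑ i, ∑ j, f i * p i j * g j) - muX p f * muY p g

lemma VX_eq {p : Fin d → Fin d → ℝ} (hp : IsConfusion p) (f : Fin d → ℝ) :
    VX p f = ∑ i, (f i - muX p f) ^ 2 * pX p i := by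
  have h1 : ∑ i, pX p i = 1 := sum_pX_eq_one hp
  have key : ∀ i ∈ Finset.univ, (f i - muX p f) ^ 2 * pX p i
      = f i ^ 2 * pX p i - 2 * muX p f * (f i * pX p i) + muX p f ^ 2 * pX p i :=
    fun i _ => by ring
  rw [Finset.sum_congr rfl key, Finset.sum_add_distrib, Finset.sum_sub_distrib,
    ← Finset.mul_sum, ← Finset.mul_sum, h1]
  unfold VX muX
  ring

lemma VY_eq {p : Fin d → Fin d → ℝ} (hp : IsConfusion p) (g : Fin d → ℝ) :
    VY p g = ∑ j, (g j - muY p g) ^ 2 * pY p j := by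
  have h1 : ∑ j, pY p j = 1 := sum_pY_eq_one hp
  have key : ∀ j ∈ Finset.univ, (g j - muY p g) ^ 2 * pY p j
      = g j ^ 2 * pY p j - 2 * muY p g * (g j * pY p j) + muY p g ^ 2 * pY p j :=
    fun j _ => by ring
  rw [Finset.sum_congr rfl key, Finset.sum_add_distrib, Finset.sum_sub_distrib,
    ← Finset.mul_sum, ← Finset.mul_sum, h1]
  unfold VY muY
  ring

lemma VX_nonneg {p : Fin d → Fin d → ℝ} (hp : IsConfusion p) (f : Fin d → ℝ) :
    0 ≤ VX p f := by
  rw [VX_eq hp]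
  exact Finset.sum_nonneg fun i _ => mul_nonneg (sq_nonneg _) (pX_nonneg hp i)

lemma VY_nonneg {p : Fin d → Fin d → ℝ} (hp : IsConfusion p) (g : Fin d → ℝ) :
    0 ≤ VY p g := by
  rw [VY_eq hp]
  exact Finset.sum_nonneg fun j _ => mul_nonneg (sq_nonneg _) (pY_nonneg hp j)

lemma cov_eq {p : Fin d → Fin d → ℝ} (hp : IsConfusion p) (f g : Fin d → ℝ) :
    cov p f g = ∑ i, ∑ j, (f i - muX p f) * (g j - muY p g) * p i j := by
  symm
  have hB : ∑ i, f i * ∑ j, p i j = muX p f := by simp only [muX, pX]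
  have hC : ∑ i, ∑ j, g j * p i j = muY p g := by
    rw [Finset.sum_comm]
    simp only [muY, pY, Finset.mul_sum]
  have hD : ∑ i, ∑ j, p i j = 1 := hp.2
  have key : ∀ i ∈ (Finset.univ : Finset (Fin d)), ∀ j ∈ (Finset.univ : Finset (Fin d)),
      (f i - muX p f) * (g j - muY p g) * p i j
      = f i * p i j * g j - muY p g * (f i * p i j) - muX p f * (g j * p i j)
        + muX p f * muY p g * p i j := fun i _ j _ => by ring
  calc ∑ i, ∑ j, (f i - muX p f) * (g j - muY p g) * p i j
      = ∑ i, ∑ j, (f i * p i j * g j - muY p g * (f i * p i j) - muX p f * (g j * p i j)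
        + muX p f * muY p g * p i j) := by
        exact Finset.sum_congr rfl fun i hi => Finset.sum_congr rfl fun j hj => key i hi j hj
    _ = cov p f g := by
        simp only [Finset.sum_add_distrib, Finset.sum_sub_distrib, ← Finset.mul_sum]
        rw [hB, hC, hD]
        unfold cov
        ring

lemma cov_sq_le {p : Fin d → Fin d → ℝ} (hp : IsConfusion p) (f g : Fin d → ℝ) :
    cov p f g ^ 2 ≤ VX p f * VY p g := by
  set μ := muX p f
  set ν := muY p g
  set a : Fin d × Fin d → ℝ := fun x => (f x.1 - μ) * Real.sqrt (p x.1 x.2) with ha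
  set b : Fin d × Fin d → ℝ := fun x => (g x.2 - ν) * Real.sqrt (p x.1 x.2) with hb
  have hsq : ∀ x : Fin d × Fin d, Real.sqrt (p x.1 x.2) * Real.sqrt (p x.1 x.2) = p x.1 x.2 :=
    fun x => Real.mul_self_sqrt (hp.1 x.1 x.2)
  have hcov : cov p f g = ∑ x : Fin d × Fin d, a x * b x := by
    rw [cov_eq hp, Fintype.sum_prod_type]
    refine Finset.sum_congr rfl fun i _ => Finset.sum_congr rfl fun j _ => ?_
    have h' : Real.sqrt (p i j) * Real.sqrt (p i j) = p i j := hsq (i, j)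
    simp only [ha, hb]
    linear_combination (-(f i - μ) * (g j - ν)) * h'
  have hVX : ∑ x : Fin d × Fin d, a x ^ 2 = VX p f := by
    rw [VX_eq hp, Fintype.sum_prod_type]
    refine Finset.sum_congr rfl fun i _ => ?_
    have : ∀ j : Fin d, a (i, j) ^ 2 = (f i - μ) ^ 2 * p i j := by
      intro j
      have h' : Real.sqrt (p i j) * Real.sqrt (p i j) = p i j := hsq (i, j)
      simp only [ha]
      linear_combination (f i - μ) ^ 2 * h'
    rw [Finset.sum_congr rfl fun j _ => this j, ← Finset.mul_sum]
    rfl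
  have hVY : ∑ x : Fin d × Fin d, b x ^ 2 = VY p g := by
    rw [VY_eq hp, Fintype.sum_prod_type, Finset.sum_comm]
    refine Finset.sum_congr rfl fun j _ => ?_
    have : ∀ i : Fin d, b (i, j) ^ 2 = (g j - ν) ^ 2 * p i j := by
      intro i
      have h' : Real.sqrt (p i j) * Real.sqrt (p i j) = p i j := hsq (i, j)
      simp only [hb]
      linear_combination (g j - ν) ^ 2 * h'
    rw [Finset.sum_congr rfl fun i _ => this i, ← Finset.mul_sum]
    rfl
  rw [hcov, ← hVX, ← hVY]
  exact Finset.sum_mul_sq_le_sq_mul_sq _ _ _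

lemma C_le_one {p : Fin d → Fin d → ℝ} (hp : IsConfusion p) {f g : Fin d → ℝ}
    (hnd : Nondeg p f g) : C p f g ≤ 1 := by
  have hx := hnd.1
  have hy := hnd.2
  have hsx : 0 < Real.sqrt (VX p f) := Real.sqrt_pos.2 hx
  have hsy : 0 < Real.sqrt (VY p g) := Real.sqrt_pos.2 hy
  have hnum : cov p f g ≤ Real.sqrt (VX p f) * Real.sqrt (VY p g) := by
    have h1 : cov p f g ≤ |cov p f g| := le_abs_self _
    have h2 : |cov p f g| = Real.sqrt (cov p f g ^ 2) := (Real.sqrt_sq_eq_abs _).symm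
    have h3 : Real.sqrt (cov p f g ^ 2) ≤ Real.sqrt (VX p f * VY p g) :=
      Real.sqrt_le_sqrt (cov_sq_le hp f g)
    rw [Real.sqrt_mul hx.le] at h3
    linarith
  have : C p f g = cov p f g / (Real.sqrt (VX p f) * Real.sqrt (VY p g)) := rfl
  rw [this, div_le_one (by positivity)]
  exact hnum

lemma bddAbove_rhoMON_set (p : Fin d → Fin d → ℝ) (hp : IsConfusion p) :
    BddAbove {r : ℝ | ∃ f g : Fin d → ℝ, Nondeg p f g ∧
      (Monotone f ∨ Antitone f) ∧ (Monotone g ∨ Antitone g) ∧ r = C p f g} := by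
  refine ⟨1, fun r hr => ?_⟩
  obtain ⟨f, g, hnd, _, _, hrC⟩ := hr
  rw [hrC]
  exact C_le_one hp hnd

lemma muY_neg (p : Fin d → Fin d → ℝ) (g : Fin d → ℝ) : muY p (-g) = -muY p g := by
  simp [muY, Finset.sum_neg_distrib, neg_mul]

lemma VY_neg (p : Fin d → Fin d → ℝ) (g : Fin d → ℝ) : VY p (-g) = VY p g := by
  simp [VY, muY_neg, neg_sq]

lemma C_neg (p : Fin d → Fin d → ℝ) (f g : Fin d → ℝ) : C p f (-g) = -(C p f g) := by
  unfold C
  rw [muY_neg, VY_neg]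
  rw [← neg_div]
  congr 1
  simp only [Pi.neg_apply, mul_neg, Finset.sum_neg_distrib]
  ring

lemma neg_mem_rhoMON_set {p : Fin d → Fin d → ℝ} {r : ℝ}
    (hr : r ∈ {r : ℝ | ∃ f g : Fin d → ℝ, Nondeg p f g ∧
      (Monotone f ∨ Antitone f) ∧ (Monotone g ∨ Antitone g) ∧ r = C p f g}) :
    -r ∈ {r : ℝ | ∃ f g : Fin d → ℝ, Nondeg p f g ∧
      (Monotone f ∨ Antitone f) ∧ (Monotone g ∨ Antitone g) ∧ r = C p f g} := by
  obtain ⟨f, g, hnd, hf, hg, hrC⟩ := hr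
  refine ⟨f, -g, ⟨hnd.1, by rw [VY_neg]; exact hnd.2⟩, hf, ?_, by rw [C_neg, hrC]⟩
  rcases hg with hg | hg
  · exact Or.inr hg.neg
  · exact Or.inl hg.neg

lemma VX_pos {p : Fin d → Fin d → ℝ} (hp : IsConfusion p) {f : Fin d → ℝ} {i i' : Fin d}
    (hne : f i ≠ f i') (hi : 0 < pX p i) (hi' : 0 < pX p i') : 0 < VX p f := by
  rcases (VX_nonneg hp f).lt_or_eq with h | h
  · exact h
  exfalso
  have h0 : ∑ k, (f k - muX p f) ^ 2 * pX p k = 0 := by rw [← VX_eq hp, ← h]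
  have hall := (Finset.sum_eq_zero_iff_of_nonneg
    (fun k _ => mul_nonneg (sq_nonneg _) (pX_nonneg hp k))).1 h0
  have key : ∀ k : Fin d, 0 < pX p k → f k = muX p f := by
    intro k hk
    have hk0 := hall k (Finset.mem_univ k)
    rcases mul_eq_zero.1 hk0 with h' | h'
    · have := pow_eq_zero_iff (n := 2) (by norm_num) |>.1 h'
      linarith [sub_eq_zero.1 this]
    · exact absurd h' hk.ne'
  exact hne (by rw [key i hi, key i' hi'])

lemma VY_pos {p : Fin d → Fin d → ℝ} (hp : IsConfusion p) {g : Fin d → ℝ} {j j' : Fin d}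
    (hne : g j ≠ g j') (hj : 0 < pY p j) (hj' : 0 < pY p j') : 0 < VY p g := by
  rcases (VY_nonneg hp g).lt_or_eq with h | h
  · exact h
  exfalso
  have h0 : ∑ k, (g k - muY p g) ^ 2 * pY p k = 0 := by rw [← VY_eq hp, ← h]
  have hall := (Finset.sum_eq_zero_iff_of_nonneg
    (fun k _ => mul_nonneg (sq_nonneg _) (pY_nonneg hp k))).1 h0
  have key : ∀ k : Fin d, 0 < pY p k → g k = muY p g := by
    intro k hk
    have hk0 := hall k (Finset.mem_univ k)
    rcases mul_eq_zero.1 hk0 with h' | h'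
    · have := pow_eq_zero_iff (n := 2) (by norm_num) |>.1 h'
      linarith [sub_eq_zero.1 this]
    · exact absurd h' hk.ne'
  exact hne (by rw [key j hj, key j' hj'])

lemma C_eq_zero_of_indep {p : Fin d → Fin d → ℝ}
    (hind : ∀ i j, p i j = pX p i * pY p j) (f g : Fin d → ℝ) : C p f g = 0 := by
  have hnum : ∑ i, ∑ j, f i * p i j * g j = muX p f * muY p g := by
    simp only [muX, muY]
    rw [Finset.sum_mul_sum]
    exact Finset.sum_congr rfl fun i _ => Finset.sum_congr rfl fun j _ => by
      rw [hind i j]; ring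
  unfold C
  rw [hnum, sub_self, zero_div]

lemma rowzero {p : Fin d → Fin d → ℝ} (hp : IsConfusion p) {i : Fin d} (h : pX p i = 0) :
    ∀ j, p i j = 0 := fun j =>
  (Finset.sum_eq_zero_iff_of_nonneg (fun j _ => hp.1 i j)).1 h j (Finset.mem_univ j)

lemma colzero {p : Fin d → Fin d → ℝ} (hp : IsConfusion p) {j : Fin d} (h : pY p j = 0) :
    ∀ i, p i j = 0 := fun i =>
  (Finset.sum_eq_zero_iff_of_nonneg (fun i _ => hp.1 i j)).1 h i (Finset.mem_univ i)

lemma colsum_q {p : Fin d → Fin d → ℝ} (hp : IsConfusion p) (j : Fin d) :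
    ∑ i, (p i j - pX p i * pY p j) = 0 := by
  rw [Finset.sum_sub_distrib, ← Finset.sum_mul, sum_pX_eq_one hp]
  simp [pY]

lemma rowsum_q {p : Fin d → Fin d → ℝ} (hp : IsConfusion p) (i : Fin d) :
    ∑ j, (p i j - pX p i * pY p j) = 0 := by
  rw [Finset.sum_sub_distrib, ← Finset.mul_sum, sum_pY_eq_one hp]
  simp [pX]

lemma F_zero {p : Fin d → Fin d → ℝ} (hp : IsConfusion p)
    (hC : ∀ f g : Fin d → ℝ, Nondeg p f g → Monotone f → Monotone g → C p f g = 0)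
    (a b : ℕ) :
    ∑ i, ∑ j, (if a ≤ i.1 ∧ b ≤ j.1 then p i j - pX p i * pY p j else 0) = 0 := by
  -- nonnegativity of the four tail/head masses
  have htermX : ∀ i ∈ (Finset.univ : Finset (Fin d)),
      (0:ℝ) ≤ if a ≤ i.1 then pX p i else 0 := fun i _ => by
    split_ifs; exacts [pX_nonneg hp i, le_refl 0]
  have htermX' : ∀ i ∈ (Finset.univ : Finset (Fin d)),
      (0:ℝ) ≤ if a ≤ i.1 then 0 else pX p i := fun i _ => by
    split_ifs; exacts [le_refl 0, pX_nonneg hp i]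
  have htermY : ∀ j ∈ (Finset.univ : Finset (Fin d)),
      (0:ℝ) ≤ if b ≤ j.1 then pY p j else 0 := fun j _ => by
    split_ifs; exacts [pY_nonneg hp j, le_refl 0]
  have htermY' : ∀ j ∈ (Finset.univ : Finset (Fin d)),
      (0:ℝ) ≤ if b ≤ j.1 then 0 else pY p j := fun j _ => by
    split_ifs; exacts [le_refl 0, pY_nonneg hp j]
  -- Case: the X-tail mass vanishes
  rcases eq_or_lt_of_le (Finset.sum_nonneg htermX) with hX0 | hXpos
  · have hall := (Finset.sum_eq_zero_iff_of_nonneg htermX).1 hX0.symm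
    refine Finset.sum_eq_zero fun i _ => Finset.sum_eq_zero fun j _ => ?_
    split_ifs with h
    · have hx : pX p i = 0 := by
        have := hall i (Finset.mem_univ i)
        rwa [if_pos h.1] at this
      rw [rowzero hp hx j, hx]; ring
    · rfl
  -- Case: the X-head mass vanishes
  rcases eq_or_lt_of_le (Finset.sum_nonneg htermX') with hX1 | hXpos'
  · have hall := (Finset.sum_eq_zero_iff_of_nonneg htermX').1 hX1.symm
    rw [Finset.sum_comm]
    refine Finset.sum_eq_zero fun j _ => ?_
    by_cases hbj : b ≤ j.1
    · have key : ∀ i ∈ (Finset.univ : Finset (Fin d)),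
          (if a ≤ i.1 ∧ b ≤ j.1 then p i j - pX p i * pY p j else 0)
            = p i j - pX p i * pY p j := by
        intro i _
        split_ifs with h
        · rfl
        · have hai : ¬ a ≤ i.1 := fun hc => h ⟨hc, hbj⟩
          have hx : pX p i = 0 := by
            have := hall i (Finset.mem_univ i)
            rwa [if_neg hai] at this
          rw [rowzero hp hx j, hx]; ring
      rw [Finset.sum_congr rfl key]
      exact colsum_q hp j
    · exact Finset.sum_eq_zero fun i _ => by simp [hbj]
  -- Case: the Y-tail mass vanishes
  rcases eq_or_lt_of_le (Finset.sum_nonneg htermY) with hY0 | hYpos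
  · have hall := (Finset.sum_eq_zero_iff_of_nonneg htermY).1 hY0.symm
    refine Finset.sum_eq_zero fun i _ => Finset.sum_eq_zero fun j _ => ?_
    split_ifs with h
    · have hy : pY p j = 0 := by
        have := hall j (Finset.mem_univ j)
        rwa [if_pos h.2] at this
      rw [colzero hp hy i, hy]; ring
    · rfl
  -- Case: the Y-head mass vanishes
  rcases eq_or_lt_of_le (Finset.sum_nonneg htermY') with hY1 | hYpos'
  · have hall := (Finset.sum_eq_zero_iff_of_nonneg htermY').1 hY1.symm
    refine Finset.sum_eq_zero fun i _ => ?_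
    by_cases hai : a ≤ i.1
    · have key : ∀ j ∈ (Finset.univ : Finset (Fin d)),
          (if a ≤ i.1 ∧ b ≤ j.1 then p i j - pX p i * pY p j else 0)
            = p i j - pX p i * pY p j := by
        intro j _
        split_ifs with h
        · rfl
        · have hbj : ¬ b ≤ j.1 := fun hc => h ⟨hai, hc⟩
          have hy : pY p j = 0 := by
            have := hall j (Finset.mem_univ j)
            rwa [if_neg hbj] at this
          rw [colzero hp hy i, hy]; ring
      rw [Finset.sum_congr rfl key]
      exact rowsum_q hp i
    · exact Finset.sum_eq_zero fun j _ => by simp [hai]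
  -- Main case: all four masses positive; use step score vectors
  · obtain ⟨i₁, -, hi₁⟩ := Finset.exists_lt_of_sum_lt
      (by simpa using hXpos : ∑ i : Fin d, (0:ℝ) < ∑ i, if a ≤ i.1 then pX p i else 0)
    obtain ⟨i₀, -, hi₀⟩ := Finset.exists_lt_of_sum_lt
      (by simpa using hXpos' : ∑ i : Fin d, (0:ℝ) < ∑ i, if a ≤ i.1 then 0 else pX p i)
    obtain ⟨j₁, -, hj₁⟩ := Finset.exists_lt_of_sum_lt
      (by simpa using hYpos : ∑ j : Fin d, (0:ℝ) < ∑ j, if b ≤ j.1 then pY p j else 0)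
    obtain ⟨j₀, -, hj₀⟩ := Finset.exists_lt_of_sum_lt
      (by simpa using hYpos' : ∑ j : Fin d, (0:ℝ) < ∑ j, if b ≤ j.1 then 0 else pY p j)
    have hi₁a : a ≤ i₁.1 ∧ 0 < pX p i₁ := by
      by_cases h : a ≤ i₁.1
      · exact ⟨h, by rwa [if_pos h] at hi₁⟩
      · rw [if_neg h] at hi₁; exact absurd hi₁ (lt_irrefl 0)
    have hi₀a : ¬ a ≤ i₀.1 ∧ 0 < pX p i₀ := by
      by_cases h : a ≤ i₀.1
      · rw [if_pos h] at hi₀; exact absurd hi₀ (lt_irrefl 0)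
      · exact ⟨h, by rwa [if_neg h] at hi₀⟩
    have hj₁b : b ≤ j₁.1 ∧ 0 < pY p j₁ := by
      by_cases h : b ≤ j₁.1
      · exact ⟨h, by rwa [if_pos h] at hj₁⟩
      · rw [if_neg h] at hj₁; exact absurd hj₁ (lt_irrefl 0)
    have hj₀b : ¬ b ≤ j₀.1 ∧ 0 < pY p j₀ := by
      by_cases h : b ≤ j₀.1
      · rw [if_pos h] at hj₀; exact absurd hj₀ (lt_irrefl 0)
      · exact ⟨h, by rwa [if_neg h] at hj₀⟩
    set f : Fin d → ℝ := fun i => if a ≤ i.1 then 1 else 0 with hfdef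
    set g : Fin d → ℝ := fun j => if b ≤ j.1 then 1 else 0 with hgdef
    have hf : Monotone f := by
      intro x y hxy
      have hxy' : x.1 ≤ y.1 := hxy
      simp only [hfdef]
      split_ifs with h1 h2 h3
      · exact le_refl 1
      · exact absurd (h1.trans hxy') h2
      · norm_num
      · exact le_refl 0
    have hg : Monotone g := by
      intro x y hxy
      have hxy' : x.1 ≤ y.1 := hxy
      simp only [hgdef]
      split_ifs with h1 h2 h3
      · exact le_refl 1
      · exact absurd (h1.trans hxy') h2
      · norm_num
      · exact le_refl 0
    have hfne : f i₁ ≠ f i₀ := by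
      simp only [hfdef]
      rw [if_pos hi₁a.1, if_neg hi₀a.1]
      norm_num
    have hgne : g j₁ ≠ g j₀ := by
      simp only [hgdef]
      rw [if_pos hj₁b.1, if_neg hj₀b.1]
      norm_num
    have hnd : Nondeg p f g :=
      ⟨VX_pos hp hfne hi₁a.2 hi₀a.2, VY_pos hp hgne hj₁b.2 hj₀b.2⟩
    have hC0 := hC f g hnd hf hg
    have hden : Real.sqrt (VX p f) * Real.sqrt (VY p g) ≠ 0 :=
      (mul_pos (Real.sqrt_pos.2 hnd.1) (Real.sqrt_pos.2 hnd.2)).ne'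
    have hcov0 : cov p f g = 0 := by
      unfold C at hC0
      rcases div_eq_zero_iff.1 hC0 with h | h
      · exact h
      · exact absurd h hden
    -- compute: the tail sum equals cov p f g
    have e1 : ∑ i, ∑ j, f i * p i j * g j
        = ∑ i, ∑ j, (if a ≤ i.1 ∧ b ≤ j.1 then p i j else 0) := by
      refine Finset.sum_congr rfl fun i _ => Finset.sum_congr rfl fun j _ => ?_
      simp only [hfdef, hgdef, ite_and]
      split_ifs <;> ring
    have e2 : muX p f = ∑ i, (if a ≤ i.1 then pX p i else 0) := by
      unfold muX
      refine Finset.sum_congr rfl fun i _ => ?_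
      simp only [hfdef]
      split_ifs <;> ring
    have e3 : muY p g = ∑ j, (if b ≤ j.1 then pY p j else 0) := by
      unfold muY
      refine Finset.sum_congr rfl fun j _ => ?_
      simp only [hgdef]
      split_ifs <;> ring
    have e4 : ∑ i, ∑ j, (if a ≤ i.1 ∧ b ≤ j.1 then pX p i * pY p j else 0)
        = (∑ i, (if a ≤ i.1 then pX p i else 0)) * (∑ j, (if b ≤ j.1 then pY p j else 0)) := by
      rw [Finset.sum_mul_sum]
      refine Finset.sum_congr rfl fun i _ => Finset.sum_congr rfl fun j _ => ?_
      simp only [ite_and]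
      split_ifs <;> ring
    have e5 : ∑ i, ∑ j, (if a ≤ i.1 ∧ b ≤ j.1 then p i j - pX p i * pY p j else 0)
        = (∑ i, ∑ j, (if a ≤ i.1 ∧ b ≤ j.1 then p i j else 0))
          - (∑ i, ∑ j, (if a ≤ i.1 ∧ b ≤ j.1 then pX p i * pY p j else 0)) := by
      rw [← Finset.sum_sub_distrib]
      refine Finset.sum_congr rfl fun i _ => ?_
      rw [← Finset.sum_sub_distrib]
      refine Finset.sum_congr rfl fun j _ => ?_
      split_ifs <;> ring
    rw [e5, e4, ← e2, ← e3, ← e1]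
    exact hcov0

lemma indep_of_F_zero {p : Fin d → Fin d → ℝ}
    (hF : ∀ a b : ℕ,
      ∑ i, ∑ j, (if a ≤ i.1 ∧ b ≤ j.1 then p i j - pX p i * pY p j else 0) = 0) :
    ∀ i j, p i j = pX p i * pY p j := by
  intro i j
  have point : ∀ i' j' : Fin d,
      (if i.1 ≤ i'.1 ∧ j.1 ≤ j'.1 then p i' j' - pX p i' * pY p j' else 0)
      - (if i.1 + 1 ≤ i'.1 ∧ j.1 ≤ j'.1 then p i' j' - pX p i' * pY p j' else 0)
      - (if i.1 ≤ i'.1 ∧ j.1 + 1 ≤ j'.1 then p i' j' - pX p i' * pY p j' else 0)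
      + (if i.1 + 1 ≤ i'.1 ∧ j.1 + 1 ≤ j'.1 then p i' j' - pX p i' * pY p j' else 0)
      = (if j'.1 = j.1 ∧ i'.1 = i.1 then p i' j' - pX p i' * pY p j' else 0) := by
    intro i' j'
    split_ifs
    all_goals try ring
    all_goals (exfalso; omega)
  have hdiag : ∑ i' : Fin d, ∑ j' : Fin d,
      (if j'.1 = j.1 ∧ i'.1 = i.1 then p i' j' - pX p i' * pY p j' else 0)
      = p i j - pX p i * pY p j := by
    simp [Fin.val_eq_val, ite_and, Finset.sum_ite_eq']
  have hcomb : ∑ i' : Fin d, ∑ j' : Fin d,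
      ((if i.1 ≤ i'.1 ∧ j.1 ≤ j'.1 then p i' j' - pX p i' * pY p j' else 0)
      - (if i.1 + 1 ≤ i'.1 ∧ j.1 ≤ j'.1 then p i' j' - pX p i' * pY p j' else 0)
      - (if i.1 ≤ i'.1 ∧ j.1 + 1 ≤ j'.1 then p i' j' - pX p i' * pY p j' else 0)
      + (if i.1 + 1 ≤ i'.1 ∧ j.1 + 1 ≤ j'.1 then p i' j' - pX p i' * pY p j' else 0)) = 0 := by
    simp only [Finset.sum_add_distrib, Finset.sum_sub_distrib]
    rw [hF i.1 j.1, hF (i.1 + 1) j.1, hF i.1 (j.1 + 1), hF (i.1 + 1) (j.1 + 1)]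
    ring
  have : p i j - pX p i * pY p j = 0 := by
    rw [← hdiag, ← Finset.sum_congr rfl
      (fun i' _ => Finset.sum_congr rfl (fun j' _ => point i' j'))]
    exact hcomb
  linarith

end Aux

theorem rhoMON_eq_zero_iff_indep (p : Fin d → Fin d → ℝ)
    (hd : 2 ≤ d) (hp : IsConfusion p) (hX : NondegX p) (hY : NondegY p) :
    rhoMON p = 0 ↔ ∀ i j, p i j = pX p i * pY p j := by
  have hBdd := bddAbove_rhoMON_set p hp
  constructor
  · -- forward direction
    intro h0 i j
    have hCzero : ∀ f g : Fin d → ℝ, Nondeg p f g → Monotone f → Monotone g →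
        C p f g = 0 := by
      intro f g hnd hf hg
      have hmem : C p f g ∈ {r : ℝ | ∃ f g : Fin d → ℝ, Nondeg p f g ∧
          (Monotone f ∨ Antitone f) ∧ (Monotone g ∨ Antitone g) ∧ r = C p f g} :=
        ⟨f, g, hnd, Or.inl hf, Or.inl hg, rfl⟩
      have h1 : C p f g ≤ rhoMON p := le_csSup hBdd hmem
      have h2 : -(C p f g) ≤ rhoMON p := le_csSup hBdd (neg_mem_rhoMON_set hmem)
      rw [h0] at h1 h2
      linarith
    exact indep_of_F_zero (F_zero hp hCzero) i j
  · -- backward direction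
    intro hind
    have hallzero : ∀ r ∈ {r : ℝ | ∃ f g : Fin d → ℝ, Nondeg p f g ∧
        (Monotone f ∨ Antitone f) ∧ (Monotone g ∨ Antitone g) ∧ r = C p f g}, r = 0 := by
      rintro r ⟨f, g, -, -, -, rfl⟩
      exact C_eq_zero_of_indep hind f g
    have hmem : (0 : ℝ) ∈ {r : ℝ | ∃ f g : Fin d → ℝ, Nondeg p f g ∧
        (Monotone f ∨ Antitone f) ∧ (Monotone g ∨ Antitone g) ∧ r = C p f g} := by
      set f : Fin d → ℝ := fun i => (i.1 : ℝ) with hfdef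
      have hf : Monotone f := by
        intro x y hxy
        have hxy' : x.1 ≤ y.1 := hxy
        simp only [hfdef]
        exact_mod_cast hxy'
      obtain ⟨i, i', hne, hi, hi'⟩ := hX
      obtain ⟨j, j', hne', hj, hj'⟩ := hY
      have hfi : f i ≠ f i' := by
        simp only [hfdef]
        exact fun h => hne (Fin.val_injective (Nat.cast_injective h))
      have hfj : f j ≠ f j' := by
        simp only [hfdef]
        exact fun h => hne' (Fin.val_injective (Nat.cast_injective h))
      have hnd : Nondeg p f f := ⟨VX_pos hp hfi hi hi', VY_pos hp hfj hj hj'⟩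
      exact ⟨f, f, hnd, Or.inl hf, Or.inl hf, (C_eq_zero_of_indep hind f f).symm⟩
    have hset : {r : ℝ | ∃ f g : Fin d → ℝ, Nondeg p f g ∧
        (Monotone f ∨ Antitone f) ∧ (Monotone g ∨ Antitone g) ∧ r = C p f g} = {0} :=
      Set.eq_singleton_iff_unique_mem.2 ⟨hmem, hallzero⟩
    unfold rhoMON
    rw [hset, csSup_singleton]
end

section
/- Let p be a d × d confusion matrix whose marginals pX and pY are both nondegenerate. Then ρ_SUP(p) = 0 if and only if p i j = pX i · pY j for all i, j. -/
open Finset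

variable {d : ℕ}

lemma aux_sum_pX (p : Fin d → Fin d → ℝ) (hp : IsConfusion p) : ∑ i, pX p i = 1 := hp.2

lemma aux_sum_pY (p : Fin d → Fin d → ℝ) (hp : IsConfusion p) : ∑ j, pY p j = 1 := by
  unfold pY; rw [Finset.sum_comm]; exact hp.2

lemma aux_cov_eq (p : Fin d → Fin d → ℝ) (hp : IsConfusion p) (f g : Fin d → ℝ) :
    (∑ i, ∑ j, f i * p i j * g j) - muX p f * muY p g
    = ∑ i, ∑ j, (f i - muX p f) * (g j - muY p g) * p i j := by
  have hmuX : muX p f = ∑ i, ∑ j, f i * p i j := by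
    unfold muX pX; exact Finset.sum_congr rfl (fun i _ => by rw [Finset.mul_sum])
  have hmuY : muY p g = ∑ i, ∑ j, g j * p i j := by
    unfold muY pY
    rw [Finset.sum_comm]
    exact Finset.sum_congr rfl (fun i _ => by rw [Finset.mul_sum])
  have h1 : ∑ i, ∑ j, (f i - muX p f) * (g j - muY p g) * p i j
      = (∑ i, ∑ j, f i * p i j * g j) - muY p g * (∑ i, ∑ j, f i * p i j)
        - muX p f * (∑ i, ∑ j, g j * p i j) + muX p f * muY p g * (∑ i, ∑ j, p i j) := by
    have step : ∑ i, ∑ j, (f i - muX p f) * (g j - muY p g) * p i j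
        = ∑ i, ∑ j, (f i * p i j * g j - muY p g * (f i * p i j)
            - muX p f * (g j * p i j) + muX p f * muY p g * p i j) :=
      Finset.sum_congr rfl fun i _ => Finset.sum_congr rfl fun j _ => by ring
    rw [step]
    simp only [Finset.sum_add_distrib, Finset.sum_sub_distrib, Finset.mul_sum]
  rw [h1, ← hmuX, ← hmuY, hp.2]
  ring

lemma aux_varX_eq (p : Fin d → Fin d → ℝ) (hp : IsConfusion p) (f : Fin d → ℝ) :
    VX p f = ∑ i, (f i - muX p f) ^ 2 * pX p i := by
  have hs : ∑ i, pX p i = 1 := hp.2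
  have h : ∑ i, (f i - muX p f) ^ 2 * pX p i
      = (∑ i, (f i)^2 * pX p i) - 2 * muX p f * (∑ i, f i * pX p i)
        + (muX p f)^2 * ∑ i, pX p i := by
    have step : ∑ i, (f i - muX p f) ^ 2 * pX p i
        = ∑ i, ((f i)^2 * pX p i - 2 * muX p f * (f i * pX p i)
            + (muX p f)^2 * pX p i) :=
      Finset.sum_congr rfl fun i _ => by ring
    rw [step]
    simp only [Finset.sum_add_distrib, Finset.sum_sub_distrib, Finset.mul_sum]
  rw [h, hs]
  unfold VX muX
  ring

lemma aux_varY_eq (p : Fin d → Fin d → ℝ) (hp : IsConfusion p) (g : Fin d → ℝ) :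
    VY p g = ∑ j, (g j - muY p g) ^ 2 * pY p j := by
  have hs : ∑ j, pY p j = 1 := aux_sum_pY p hp
  have h : ∑ j, (g j - muY p g) ^ 2 * pY p j
      = (∑ j, (g j)^2 * pY p j) - 2 * muY p g * (∑ j, g j * pY p j)
        + (muY p g)^2 * ∑ j, pY p j := by
    have step : ∑ j, (g j - muY p g) ^ 2 * pY p j
        = ∑ j, ((g j)^2 * pY p j - 2 * muY p g * (g j * pY p j)
            + (muY p g)^2 * pY p j) :=
      Finset.sum_congr rfl fun j _ => by ring
    rw [step]
    simp only [Finset.sum_add_distrib, Finset.sum_sub_distrib, Finset.mul_sum]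
  rw [h, hs]
  unfold VY muY
  ring

lemma aux_cov_le (p : Fin d → Fin d → ℝ) (hp : IsConfusion p) (f g : Fin d → ℝ) :
    ∑ i, ∑ j, (f i - muX p f) * (g j - muY p g) * p i j
      ≤ Real.sqrt (VX p f) * Real.sqrt (VY p g) := by
  set a := muX p f
  set b := muY p g
  have key := Real.sum_mul_le_sqrt_mul_sqrt (Finset.univ : Finset (Fin d × Fin d))
    (fun x => (f x.1 - a) * Real.sqrt (p x.1 x.2))
    (fun x => (g x.2 - b) * Real.sqrt (p x.1 x.2))
  have h1 : ∑ x : Fin d × Fin d, ((f x.1 - a) * Real.sqrt (p x.1 x.2)) *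
      ((g x.2 - b) * Real.sqrt (p x.1 x.2)) = ∑ i, ∑ j, (f i - a) * (g j - b) * p i j := by
    rw [Fintype.sum_prod_type]
    refine Finset.sum_congr rfl fun i _ => Finset.sum_congr rfl fun j _ => ?_
    rw [show ((f i - a) * Real.sqrt (p i j)) * ((g j - b) * Real.sqrt (p i j))
        = (f i - a) * (g j - b) * (Real.sqrt (p i j) * Real.sqrt (p i j)) from by ring,
      Real.mul_self_sqrt (hp.1 i j)]
  have h2 : ∑ x : Fin d × Fin d, ((f x.1 - a) * Real.sqrt (p x.1 x.2)) ^ 2 = VX p f := by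
    rw [aux_varX_eq p hp f, Fintype.sum_prod_type]
    refine Finset.sum_congr rfl fun i _ => ?_
    unfold pX
    rw [Finset.mul_sum]
    refine Finset.sum_congr rfl fun j _ => ?_
    rw [mul_pow, Real.sq_sqrt (hp.1 i j)]
  have h3 : ∑ x : Fin d × Fin d, ((g x.2 - b) * Real.sqrt (p x.1 x.2)) ^ 2 = VY p g := by
    rw [aux_varY_eq p hp g, Fintype.sum_prod_type_right]
    refine Finset.sum_congr rfl fun j _ => ?_
    unfold pY
    rw [Finset.mul_sum]
    refine Finset.sum_congr rfl fun i _ => ?_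
    rw [mul_pow, Real.sq_sqrt (hp.1 i j)]
  rw [h1, h2, h3] at key
  exact key

lemma aux_C_le_one (p : Fin d → Fin d → ℝ) (hp : IsConfusion p) (f g : Fin d → ℝ)
    (h : Nondeg p f g) : C p f g ≤ 1 := by
  have hden : 0 < Real.sqrt (VX p f) * Real.sqrt (VY p g) :=
    mul_pos (Real.sqrt_pos.2 h.1) (Real.sqrt_pos.2 h.2)
  unfold C
  rw [div_le_one hden, aux_cov_eq p hp f g]
  exact aux_cov_le p hp f g

lemma aux_bddAbove (p : Fin d → Fin d → ℝ) (hp : IsConfusion p) :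
    BddAbove {r : ℝ | ∃ f g : Fin d → ℝ, Nondeg p f g ∧ r = C p f g} := by
  refine ⟨1, fun r hr => ?_⟩
  obtain ⟨f, g, hnd, rfl⟩ := hr
  exact aux_C_le_one p hp f g hnd

lemma aux_marg_lt_one {w : Fin d → ℝ} (hw : ∀ i, 0 ≤ w i) (hs : ∑ i, w i = 1)
    {i0 i' : Fin d} (h : i' ≠ i0) (hpos : 0 < w i') : w i0 < 1 := by
  have hle : w i0 + w i' ≤ 1 := by
    rw [← hs]
    have hsub := Finset.sum_le_sum_of_subset_of_nonneg
      (Finset.subset_univ ({i0, i'} : Finset (Fin d))) (fun i _ _ => hw i)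
    rwa [Finset.sum_pair (Ne.symm h)] at hsub
  linarith

lemma aux_VX_ind (p : Fin d → Fin d → ℝ) (i0 : Fin d) :
    VX p (fun i => if i = i0 then (1:ℝ) else 0) = pX p i0 * (1 - pX p i0) := by
  unfold VX muX
  simp [ite_mul, ite_pow]
  ring

lemma aux_VY_ind (p : Fin d → Fin d → ℝ) (j0 : Fin d) (t : ℝ) :
    VY p (fun j => t * if j = j0 then (1:ℝ) else 0) = t^2 * (pY p j0 * (1 - pY p j0)) := by
  unfold VY muY
  simp [mul_ite, ite_mul, mul_pow, ite_pow]
  ring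

lemma aux_muX_ind (p : Fin d → Fin d → ℝ) (i0 : Fin d) :
    muX p (fun i => if i = i0 then (1:ℝ) else 0) = pX p i0 := by
  unfold muX; simp [ite_mul]

lemma aux_muY_ind (p : Fin d → Fin d → ℝ) (j0 : Fin d) (t : ℝ) :
    muY p (fun j => t * if j = j0 then (1:ℝ) else 0) = t * pY p j0 := by
  unfold muY; simp [ite_mul, mul_ite]

lemma aux_dsum_ind (p : Fin d → Fin d → ℝ) (i0 j0 : Fin d) (t : ℝ) :
    ∑ i, ∑ j, (if i = i0 then (1:ℝ) else 0) * p i j * (t * if j = j0 then (1:ℝ) else 0)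
      = t * p i0 j0 := by
  simp [ite_mul, mul_ite]
  ring

lemma aux_exists_pos (p : Fin d → Fin d → ℝ) (hp : IsConfusion p) {i0 j0 : Fin d}
    (hX0 : 0 < pX p i0) (hX1 : pX p i0 < 1) (hY0 : 0 < pY p j0) (hY1 : pY p j0 < 1)
    (hne : p i0 j0 ≠ pX p i0 * pY p j0) :
    ∃ f g : Fin d → ℝ, Nondeg p f g ∧ 0 < C p f g := by
  set t : ℝ := if pX p i0 * pY p j0 < p i0 j0 then 1 else -1 with ht
  have ht2 : t ^ 2 = 1 := by rw [ht]; split_ifs <;> norm_num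
  refine ⟨(fun i => if i = i0 then 1 else 0), (fun j => t * if j = j0 then 1 else 0), ⟨?_, ?_⟩, ?_⟩
  · rw [aux_VX_ind]
    exact mul_pos hX0 (by linarith)
  · rw [aux_VY_ind, ht2, one_mul]
    exact mul_pos hY0 (by linarith)
  · unfold C
    apply div_pos
    · rw [aux_dsum_ind, aux_muX_ind, aux_muY_ind]
      have : t * p i0 j0 - pX p i0 * (t * pY p j0)
          = t * (p i0 j0 - pX p i0 * pY p j0) := by ring
      rw [this, ht]
      rcases lt_or_gt_of_ne hne with hlt | hgt
      · rw [if_neg (not_lt.2 hlt.le)]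
        nlinarith
      · rw [if_pos hgt]
        nlinarith
    · apply mul_pos <;> rw [Real.sqrt_pos]
      · rw [aux_VX_ind]; exact mul_pos hX0 (by linarith)
      · rw [aux_VY_ind, ht2, one_mul]; exact mul_pos hY0 (by linarith)

theorem rhoSUP_eq_zero_iff_indep (p : Fin d → Fin d → ℝ)
    (hd : 2 ≤ d) (hp : IsConfusion p) (hX : NondegX p) (hY : NondegY p) :
    rhoSUP p = 0 ↔ ∀ i j, p i j = pX p i * pY p j := by
  obtain ⟨i1, i2, hii, hXi1, hXi2⟩ := hX
  obtain ⟨j1, j2, hjj, hYj1, hYj2⟩ := hY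
  have hpXnn : ∀ i, 0 ≤ pX p i := fun i => Finset.sum_nonneg fun j _ => hp.1 i j
  have hpYnn : ∀ j, 0 ≤ pY p j := fun j => Finset.sum_nonneg fun i _ => hp.1 i j
  have hsX : ∑ i, pX p i = 1 := hp.2
  have hsY : ∑ j, pY p j = 1 := aux_sum_pY p hp
  constructor
  · intro hr i0 j0
    by_contra hne
    -- positivity of marginals at i0, j0
    have hX0 : 0 < pX p i0 := by
      rcases (hpXnn i0).lt_or_eq with h | h
      · exact h
      · exfalso
        have hle : p i0 j0 ≤ pX p i0 :=
          Finset.single_le_sum (fun j _ => hp.1 i0 j) (Finset.mem_univ j0)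
        have h1 : p i0 j0 = 0 := le_antisymm (by rw [← h] at hle; exact hle) (hp.1 i0 j0)
        exact hne (by rw [h1, ← h]; ring)
    have hY0 : 0 < pY p j0 := by
      rcases (hpYnn j0).lt_or_eq with h | h
      · exact h
      · exfalso
        have hle : p i0 j0 ≤ pY p j0 :=
          Finset.single_le_sum (fun i _ => hp.1 i j0) (Finset.mem_univ i0)
        have h1 : p i0 j0 = 0 := le_antisymm (by rw [← h] at hle; exact hle) (hp.1 i0 j0)
        exact hne (by rw [h1, ← h]; ring)
    have hX1 : pX p i0 < 1 := by
      by_cases hc : i1 = i0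
      · exact aux_marg_lt_one hpXnn hsX (fun h => hii (hc.trans h.symm)) hXi2
      · exact aux_marg_lt_one hpXnn hsX hc hXi1
    have hY1 : pY p j0 < 1 := by
      by_cases hc : j1 = j0
      · exact aux_marg_lt_one hpYnn hsY (fun h => hjj (hc.trans h.symm)) hYj2
      · exact aux_marg_lt_one hpYnn hsY hc hYj1
    obtain ⟨f, g, hnd, hCpos⟩ := aux_exists_pos p hp hX0 hX1 hY0 hY1 hne
    have hmem : C p f g ∈ {r : ℝ | ∃ f g : Fin d → ℝ, Nondeg p f g ∧ r = C p f g} :=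
      ⟨f, g, hnd, rfl⟩
    have := le_csSup (aux_bddAbove p hp) hmem
    rw [← rhoSUP, hr] at this
    linarith
  · intro hind
    have hCzero : ∀ f g : Fin d → ℝ, C p f g = 0 := by
      intro f g
      have hnum : ∑ i, ∑ j, f i * p i j * g j = muX p f * muY p g := by
        have h1 : ∀ i : Fin d, ∑ j, f i * p i j * g j
            = (f i * pX p i) * ∑ j, g j * pY p j := by
          intro i
          rw [Finset.mul_sum]
          refine Finset.sum_congr rfl fun j _ => ?_
          rw [hind i j]; ring
        calc ∑ i, ∑ j, f i * p i j * g j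
            = ∑ i, (f i * pX p i) * ∑ j, g j * pY p j :=
              Finset.sum_congr rfl fun i _ => h1 i
          _ = (∑ i, f i * pX p i) * ∑ j, g j * pY p j := by rw [← Finset.sum_mul]
          _ = muX p f * muY p g := rfl
      unfold C
      rw [hnum, sub_self, zero_div]
    have hset : {r : ℝ | ∃ f g : Fin d → ℝ, Nondeg p f g ∧ r = C p f g} = {0} := by
      apply Set.eq_singleton_iff_unique_mem.2
      constructor
      · -- 0 is attained
        have hX1 : pX p i1 < 1 := aux_marg_lt_one hpXnn hsX (Ne.symm hii) hXi2
        have hY1 : pY p j1 < 1 := aux_marg_lt_one hpYnn hsY (Ne.symm hjj) hYj2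
        refine ⟨(fun i => if i = i1 then 1 else 0),
          (fun j => (1:ℝ) * if j = j1 then 1 else 0), ⟨?_, ?_⟩, (hCzero _ _).symm⟩
        · rw [aux_VX_ind]; exact mul_pos hXi1 (by linarith)
        · rw [aux_VY_ind]; norm_num; exact mul_pos hYj1 (by linarith)
      · rintro r ⟨f, g, _, rfl⟩
        exact hCzero f g
    unfold rhoSUP
    rw [hset, csSup_singleton]
end
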